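/- Let 𝒞 be a Z2Z4-additive code generated as a group by a finite set G ⊆ Z2^α × Z4^β. Then Φ(𝒞) is a Z2-linear subspace of Z2^(α+2β) if and only if 2(g*h) ∈ 𝒞 for all g, h ∈ G. -/

import Mathlib

/-- The ambient group `Z2^α × Z4^β`, with componentwise ring structure
(so `u * v` is the componentwise product). -/
abbrev Amb (α β : ℕ) := (Fin α → ZMod 2) × (Fin β → ZMod 4)

/-- The binary space `Z2^α × (Z2²)^β ≅ Z2^(α+2β)`. -/
abbrev Bin (α β : ℕ) := (Fin α → ZMod 2) × (Fin β → ZMod 2 × ZMod 2)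

/-- The Gray map `φ : Z4 → Z2²` with `φ(0)=(0,0), φ(1)=(0,1), φ(2)=(1,1), φ(3)=(1,0)`. -/
def grayPair (y : ZMod 4) : ZMod 2 × ZMod 2 :=
  match y.val with
  | 0 => (0, 0)
  | 1 => (0, 1)
  | 2 => (1, 1)
  | _ => (1, 0)

/-- The extended Gray map `Φ : Z2^α × Z4^β → Z2^(α+2β)`. -/
def Phi {α β : ℕ} (u : Amb α β) : Bin α β :=
  (u.1, fun i => grayPair (u.2 i))

/-- The kernel `K(C) = {x | x + C = C}` of a binary code. -/
def kernelK {α β : ℕ} (C : Set (Bin α β)) : Set (Bin α β) :=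
  {x | (fun y => x + y) '' C = C}

/-- The rank of a binary code: the `Z2`-dimension of its linear span. -/
noncomputable def rankOf {α β : ℕ} (C : Set (Bin α β)) : ℕ :=
  Module.finrank (ZMod 2) (Submodule.span (ZMod 2) C)

/-- The dimension of the kernel of a binary code. -/
noncomputable def kerDim {α β : ℕ} (C : Set (Bin α β)) : ℕ :=
  Module.finrank (ZMod 2) (Submodule.span (ZMod 2) (kernelK C))

/-- A `Z2Z4`-additive code `C ⊆ Z2^α × Z4^β` is of type `(α,β;γ,δ;κ)`:
`|C| = 2^(γ+2δ)`, the number of elements `x` with `2x = 0` is `2^(γ+δ)`, and `κ` is the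
`Z2`-dimension of the projection onto the first `α` coordinates of `{x ∈ C | 2x = 0}`. -/
def IsTypeOf (α β γ δ κ : ℕ) (C : AddSubgroup (Amb α β)) : Prop :=
  Nat.card C = 2 ^ (γ + 2 * δ) ∧
  Nat.card {x : Amb α β | x ∈ C ∧ 2 • x = 0} = 2 ^ (γ + δ) ∧
  Module.finrank (ZMod 2)
    (Submodule.span (ZMod 2) (Prod.fst '' {x : Amb α β | x ∈ C ∧ 2 • x = 0})) = κ

/-!
Over `Z4` the Gray map satisfies `φ(a) + φ(b) = φ(a + b + 2ab)`, and the same identity holds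
trivially on `Z2`, so `Φ(u) + Φ(v) = Φ(u + v + 2(u*v))`. As `Φ` is injective, `Φ(𝒞)` is closed
under addition exactly when `2(u*v) ∈ 𝒞` for all `u, v ∈ 𝒞`; over `Z2` closure under addition
is linearity. Since `(u, v) ↦ 2(u*v)` is biadditive, it suffices to check this on generators.
-/

theorem AddSubgroup.apply_mem_of_mem_closure₂ {M N P : Type*} [AddCommGroup M] [AddCommGroup N]
    [AddCommGroup P] (B : M →+ N →+ P) {s : Set M} {t : Set N} {H : AddSubgroup P}
    (hB : ∀ x ∈ s, ∀ y ∈ t, B x y ∈ H) {x : M} {y : N} (hx : x ∈ closure s)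
    (hy : y ∈ closure t) : B x y ∈ H := by
  have hs : ∀ x ∈ s, closure t ≤ H.comap (B x) := fun x hx =>
    (closure_le _).2 fun y hy => hB x hx y hy
  exact (closure_le (H.comap (B.flip y))).2 (fun x' hx' => hs x' hx' hy) hx

theorem exists_zmod_two_submodule_coe_eq_iff {M : Type*} [AddCommGroup M] [Module (ZMod 2) M]
    {s : Set M} (h0 : 0 ∈ s) :
    (∃ W : Submodule (ZMod 2) M, (W : Set M) = s) ↔ ∀ a ∈ s, ∀ b ∈ s, a + b ∈ s := by
  constructor
  · rintro ⟨W, rfl⟩ a ha b hb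
    exact W.add_mem ha hb
  · intro hadd
    refine ⟨{ carrier := s
              add_mem' := fun ha hb => hadd _ ha _ hb
              zero_mem' := h0
              smul_mem' := fun c a ha => ?_ }, rfl⟩
    rcases (show c = 0 ∨ c = 1 by revert c; decide) with rfl | rfl
    · simpa only [zero_smul] using h0
    · simpa only [one_smul] using ha

theorem grayPair_add (a b : ZMod 4) :
    grayPair a + grayPair b = grayPair (a + b + 2 * (a * b)) := by
  revert a b; decide

theorem grayPair_injective : Function.Injective grayPair := by decide

theorem Phi_add {α β : ℕ} (u v : Amb α β) : Phi u + Phi v = Phi (u + v + 2 * (u * v)) := by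
  have hZ2 : ∀ a b : ZMod 2, a + b = a + b + 2 * (a * b) := by decide
  ext i
  · exact hZ2 _ _
  · exact congrArg Prod.fst (grayPair_add (u.2 i) (v.2 i))
  · exact congrArg Prod.snd (grayPair_add (u.2 i) (v.2 i))

theorem Phi_injective {α β : ℕ} : Function.Injective (Phi (α := α) (β := β)) := by
  rintro ⟨x, y⟩ ⟨x', y'⟩ h
  simp only [Phi, Prod.mk.injEq, funext_iff] at h
  exact Prod.ext (funext h.1) (funext fun i => grayPair_injective (h.2 i))

theorem Phi_zero {α β : ℕ} : Phi (0 : Amb α β) = 0 := by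
  ext i <;> rfl

theorem Phi_add_mem_image_iff {α β : ℕ} {C : AddSubgroup (Amb α β)} {u v : Amb α β}
    (hu : u ∈ C) (hv : v ∈ C) :
    Phi u + Phi v ∈ Phi '' (C : Set (Amb α β)) ↔ 2 * (u * v) ∈ C := by
  rw [Phi_add, Phi_injective.mem_set_image, SetLike.mem_coe,
    C.add_mem_cancel_left (C.add_mem hu hv)]

/-- If `𝒞` is generated as a group by a finite set `G`, then `Φ(𝒞)` is a
`Z2`-linear subspace iff `2(g*h) ∈ 𝒞` for all `g, h ∈ G`. -/
theorem gray_image_linear_iff_generators (α β : ℕ) (G : Finset (Amb α β)) :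
    (∃ W : Submodule (ZMod 2) (Bin α β),
        (W : Set (Bin α β)) =
          Phi '' (AddSubgroup.closure (G : Set (Amb α β)) : Set (Amb α β))) ↔
      ∀ g ∈ G, ∀ h ∈ G, 2 * (g * h) ∈ AddSubgroup.closure (G : Set (Amb α β)) := by
  set C := AddSubgroup.closure (G : Set (Amb α β))
  rw [exists_zmod_two_submodule_coe_eq_iff (s := Phi '' (C : Set (Amb α β)))
    ⟨0, C.zero_mem, Phi_zero⟩]
  constructor
  · intro hadd g hg h hh
    have hgC : g ∈ C := AddSubgroup.subset_closure hg
    have hhC : h ∈ C := AddSubgroup.subset_closure hh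
    exact (Phi_add_mem_image_iff hgC hhC).1 (hadd _ ⟨g, hgC, rfl⟩ _ ⟨h, hhC, rfl⟩)
  · rintro hG _ ⟨u, hu, rfl⟩ _ ⟨v, hv, rfl⟩
    exact (Phi_add_mem_image_iff hu hv).2 <|
      AddSubgroup.apply_mem_of_mem_closure₂ (AddMonoidHom.mul.compr₂ (AddMonoidHom.mulLeft 2))
        hG hu hv
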